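/- Let R be a PvMD and P a t-prime ideal of R. The following are equivalent: (i) P is branched; (ii) P is a minimal prime of a nonzero principal ideal; (iii) P is a minimal prime of a nonzero finitely generated ideal; (iv) P is a minimal prime of a v-finite divisorial ideal; (v) P is not the union of the set of primes of R properly contained in P. -/

import Mathlib

/-! Definitions following El Baghdadi–Gabelli, "Ring-theoretic properties of PvMDs".
`A` is an integral domain with quotient field `K`; all star-operation notions are
defined for an algebra `A → K` (instantiated with `K = FractionRing A`). -/

namespace Paper

section NoField

variable (A : Type*) [CommRing A]

/-- Finite character: every nonzero nonunit lies in only finitely many maximal ideals. -/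
def FiniteCharacter : Prop :=
  ∀ x : A, x ≠ 0 → ¬ IsUnit x → {M : Ideal A | M.IsMaximal ∧ x ∈ M}.Finite

/-- Ascending chain condition on radical ideals. -/
def ACCRadical : Prop :=
  ∀ f : ℕ →o Ideal A, (∀ n, (f n).IsRadical) → ∃ n, ∀ m, n ≤ m → f m = f n

/-- `P` is a branched prime: there is a `P`-primary ideal different from `P`. -/
def IsBranched (P : Ideal A) : Prop :=
  P.IsPrime ∧ P ≠ ⊥ ∧ ∃ Q : Ideal A, Q.IsPrimary ∧ Q.radical = P ∧ Q ≠ P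

/-- `P` is a height-one prime of the domain `A`. -/
def HeightOne (P : Ideal A) : Prop :=
  P.IsPrime ∧ P ≠ ⊥ ∧ ∀ Q : Ideal A, Q.IsPrime → Q < P → Q = ⊥

end NoField

section Generic

variable (A : Type*) (K : Type*) [CommRing A] [CommRing K] [Algebra A K]

/-- The image of an ideal `I` of `A` in `K`, as an `A`-submodule of `K`. -/
def sub (I : Ideal A) : Submodule A K := Submodule.map (Algebra.linearMap A K) I

/-- The dual `(A : E) = {x ∈ K : xE ⊆ A}` of an `A`-submodule `E` of `K`. -/
def dual (E : Submodule A K) : Submodule A K := 1 / E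

/-- The `v`-operation `E ↦ (A : (A : E))` on submodules of `K`. -/
def vop (E : Submodule A K) : Submodule A K := dual A K (dual A K E)

/-- The `v`-closure `I_v` of an ideal `I` of `A`, as an ideal of `A`. -/
def vcl (I : Ideal A) : Ideal A := (vop A K (sub A K I)).comap (Algebra.linearMap A K)

/-- The `t`-closure `I_t = ⋃ J_v`, `J` ranging over the nonzero finitely generated
subideals of `I`. -/
def tcl (I : Ideal A) : Ideal A :=
  ⨆ J : {J : Ideal A // J.FG ∧ J ≠ ⊥ ∧ J ≤ I}, vcl A K J.1

/-- A (nonzero) `t`-ideal. -/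
def IsTIdeal (I : Ideal A) : Prop := I ≠ ⊥ ∧ tcl A K I = I

/-- A prime `t`-ideal. -/
def IsTPrime (P : Ideal A) : Prop := P.IsPrime ∧ IsTIdeal A K P

/-- A `t`-maximal ideal: maximal among proper `t`-ideals. -/
def IsTMax (M : Ideal A) : Prop :=
  IsTIdeal A K M ∧ M ≠ ⊤ ∧ ∀ J : Ideal A, IsTIdeal A K J → J ≠ ⊤ → M ≤ J → J = M

/-- The localization `A_P ⊆ K` of `A` at (the complement of) a prime `P`, as a subset of `K`. -/
def locSet (P : Ideal A) : Set K :=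
  {x | ∃ a s : A, s ∉ P ∧ algebraMap A K s * x = algebraMap A K a}

/-- The trace ideal `I(A:I)`, as an ideal of `A`. -/
def traceIdeal (I : Ideal A) : Ideal A :=
  (sub A K I * dual A K (sub A K I)).comap (Algebra.linearMap A K)

/-- `I` is `t`-invertible: `(I(A:I))_t = A`. -/
def IsTInvertible (I : Ideal A) : Prop := tcl A K (traceIdeal A K I) = ⊤

/-- The `t`-radical trace property: for every nonzero ideal `I`, `(I(A:I))_t` is `A`
or a radical ideal. -/
def IsTRTP : Prop :=
  ∀ I : Ideal A, I ≠ ⊥ →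
    tcl A K (traceIdeal A K I) = ⊤ ∨ (tcl A K (traceIdeal A K I)).IsRadical

/-- The radical trace property: for every nonzero ideal `I`, `I(A:I)` is `A`
or a radical ideal. -/
def IsRTP : Prop :=
  ∀ I : Ideal A, I ≠ ⊥ → traceIdeal A K I = ⊤ ∨ (traceIdeal A K I).IsRadical

/-- The `t#`-property. -/
def IsTSharp : Prop :=
  ∀ M₁ M₂ : Set (Ideal A), M₁ ⊆ {M | IsTMax A K M} → M₂ ⊆ {M | IsTMax A K M} →
    M₁ ≠ M₂ → (⋂ M ∈ M₁, locSet A K M) ≠ (⋂ M ∈ M₂, locSet A K M)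

/-- The `t##`-property. -/
def IsTSharpSharp : Prop :=
  ∀ P₁ P₂ : Set (Ideal A), P₁ ⊆ {P | IsTPrime A K P} → P₂ ⊆ {P | IsTPrime A K P} →
    (∀ P ∈ P₁, ∀ Q ∈ P₁, P ≤ Q → P = Q) → (∀ P ∈ P₂, ∀ Q ∈ P₂, P ≤ Q → P = Q) →
    P₁ ≠ P₂ → (⋂ P ∈ P₁, locSet A K P) ≠ (⋂ P ∈ P₂, locSet A K P)

/-- The `#`-property. -/
def IsSharp : Prop :=
  ∀ M₁ M₂ : Set (Ideal A), M₁.Nonempty → M₂.Nonempty →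
    M₁ ⊆ {M | M.IsMaximal} → M₂ ⊆ {M | M.IsMaximal} →
    M₁ ≠ M₂ → (⋂ M ∈ M₁, locSet A K M) ≠ (⋂ M ∈ M₂, locSet A K M)

/-- Ascending chain condition on radical `t`-ideals. -/
def ACCRadicalT : Prop :=
  ∀ f : ℕ →o Ideal A, (∀ n, IsTIdeal A K (f n) ∧ (f n).IsRadical) →
    ∃ n, ∀ m, n ≤ m → f m = f n

/-- Ascending chain condition on prime `t`-ideals. -/
def ACCPrimeT : Prop :=
  ∀ f : ℕ →o Ideal A, (∀ n, IsTPrime A K (f n)) → ∃ n, ∀ m, n ≤ m → f m = f n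

/-- `t`-finite character: every nonzero nonunit lies in only finitely many
`t`-maximal ideals. -/
def TFiniteCharacter : Prop :=
  ∀ x : A, x ≠ 0 → ¬ IsUnit x → {M : Ideal A | IsTMax A K M ∧ x ∈ M}.Finite

/-- Weakly Matlis: `t`-finite character and every `t`-prime is contained in a unique
`t`-maximal ideal. -/
def IsWeaklyMatlis : Prop :=
  TFiniteCharacter A K ∧ ∀ P : Ideal A, IsTPrime A K P → ∃! M : Ideal A, IsTMax A K M ∧ P ≤ M

/-- h-local: finite character and every nonzero prime is contained in a unique
maximal ideal. -/
def IsHLocal : Prop :=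
  FiniteCharacter A ∧
    ∀ P : Ideal A, P.IsPrime → P ≠ ⊥ → ∃! M : Ideal A, M.IsMaximal ∧ P ≤ M

/-- Prüfer domain: every nonzero finitely generated ideal is invertible. -/
def IsPruferD : Prop :=
  ∀ I : Ideal A, I ≠ ⊥ → I.FG → sub A K I * dual A K (sub A K I) = 1

/-- Strongly discrete Prüfer domain: `P ≠ P²` for all nonzero primes. -/
def IsSDPrufer : Prop :=
  IsPruferD A K ∧ ∀ P : Ideal A, P.IsPrime → P ≠ ⊥ → P * P ≠ P

/-- Generalized Dedekind domain. -/
def IsGenDedekind : Prop := IsSDPrufer A K ∧ ACCRadical A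

/-- Divisorial domain: every nonzero ideal is divisorial. -/
def IsDivisorialDomain : Prop := ∀ I : Ideal A, I ≠ ⊥ → vcl A K I = I

/-- Stable domain: every nonzero ideal `J` satisfies `J((J:J):J) = (J:J)`. -/
def IsStableDomain : Prop :=
  ∀ J : Ideal A, J ≠ ⊥ →
    sub A K J * ((sub A K J / sub A K J) / sub A K J) = sub A K J / sub A K J

/-- The `w`-operation (as a semistar operation): `E_w = ⋂_{M ∈ t-Max(A)} E A_M`,
computed as a subset of `K`. -/
def wSet (E : Submodule A K) : Set K :=
  ⋂ M ∈ {M : Ideal A | IsTMax A K M}, {x : K | ∃ s : A, s ∉ M ∧ s • x ∈ E}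

/-- A (nonzero) `w`-ideal: `I = I_w`. -/
def IsWIdeal (I : Ideal A) : Prop := I ≠ ⊥ ∧ wSet A K (sub A K I) = (sub A K I : Set K)

/-- The endomorphism ring `E(I) = (I : I)`, as a submodule of `K`. -/
def eRing (I : Ideal A) : Submodule A K := sub A K I / sub A K I

/-- `I` is a `w`-stable ideal: `(I(E(I):I))_w = E(I)`. -/
def IsWStableIdeal (I : Ideal A) : Prop :=
  wSet A K (sub A K I * (eRing A K I / sub A K I)) = (eRing A K I : Set K)

/-- `A` is `w`-stable: every `w`-ideal is `w`-stable. -/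
def IsWStable : Prop := ∀ I : Ideal A, IsWIdeal A K I → IsWStableIdeal A K I

/-- `A` is `w`-divisorial: `I_w = I_v` for every nonzero ideal. -/
def IsWDivisorial : Prop :=
  ∀ I : Ideal A, I ≠ ⊥ → wSet A K (sub A K I) = ((vop A K (sub A K I) : Submodule A K) : Set K)

/-- The endomorphism ring `E(I) = (I : I)` as a subalgebra of `K`. -/
def eSubalgebra (I : Ideal A) : Subalgebra A K where
  carrier := {x : K | ∀ y ∈ sub A K I, x * y ∈ sub A K I}
  mul_mem' := by
    intro a b ha hb y hy
    rw [mul_assoc]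
    exact ha _ (hb _ hy)
  one_mem' := by
    intro y hy
    rw [one_mul]; exact hy
  add_mem' := by
    intro a b ha hb y hy
    rw [add_mul]
    exact Submodule.add_mem _ (ha _ hy) (hb _ hy)
  zero_mem' := by
    intro y hy
    rw [zero_mul]
    exact Submodule.zero_mem _
  algebraMap_mem' := by
    intro r y hy
    rw [← Algebra.smul_def]
    exact Submodule.smul_mem _ r hy

end Generic

section Domain

variable (R : Type*) [CommRing R] [IsDomain R]

/-- A Prüfer `v`-multiplication domain: the localization at every `t`-maximal ideal
is a valuation domain. -/
def IsPvMD : Prop :=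
  ∀ M : Ideal R, IsTMax R (FractionRing R) M →
    ∃ _ : M.IsPrime, ValuationRing (Localization.AtPrime M)

/-- A strongly discrete PvMD: `(P²)_t ≠ P` for every `t`-prime `P`. -/
def IsSDPvMD : Prop :=
  IsPvMD R ∧ ∀ P : Ideal R, IsTPrime R (FractionRing R) P →
    tcl R (FractionRing R) (P * P) ≠ P

/-- A generalized Krull domain: a strongly discrete PvMD with ACC on radical
`t`-ideals. -/
def IsGenKrull : Prop := IsSDPvMD R ∧ ACCRadicalT R (FractionRing R)

/-- An almost Krull domain: the localization at every `t`-maximal ideal is a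
rank-one discrete valuation ring. -/
def IsAlmostKrull : Prop :=
  ∀ M : Ideal R, IsTMax R (FractionRing R) M →
    ∃ _ : M.IsPrime, IsDiscreteValuationRing (Localization.AtPrime M)

/-- A Krull domain: `R = ⋂ R_P` over the height-one primes, each such localization
is a DVR, and every nonzero element lies in only finitely many height-one primes. -/
def IsKrull : Prop :=
  (((1 : Submodule R (FractionRing R)) : Set (FractionRing R)) =
      ⋂ P ∈ {P : Ideal R | HeightOne R P}, locSet R (FractionRing R) P) ∧
    (∀ P : Ideal R, HeightOne R P →
      ∃ _ : P.IsPrime, IsDiscreteValuationRing (Localization.AtPrime P)) ∧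
    ∀ x : R, x ≠ 0 → {P : Ideal R | HeightOne R P ∧ x ∈ P}.Finite

end Domain


section CommRingNagata

variable (R : Type*) [CommRing R]

/-- The multiplicative set `N_t = {f ∈ R[X] : (c(f))_t = R}` (it is multiplicatively
closed, so taking the closure does not change it). -/
noncomputable def NtMonoid : Submonoid (Polynomial R) :=
  Submonoid.closure
    {f : Polynomial R | tcl R (FractionRing R) (Ideal.span (Set.range f.coeff)) = ⊤}

/-- The `t`-Nagata ring `R⟨X⟩ = R[X]_{N_t}`. -/
def tNagata : Type _ := Localization (NtMonoid R)

noncomputable instance : CommRing (tNagata R) :=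
  inferInstanceAs (CommRing (Localization (NtMonoid R)))

/-- The `##`-property: every overring is a `#`-domain. -/
def IsSharpSharp : Prop :=
  ∀ T : Subalgebra R (FractionRing R), IsSharp ↥T (FractionRing R)


end CommRingNagata

end Paper


namespace Paper

variable (R : Type*) [CommRing R] [IsDomain R]

local notation "KK" => FractionRing R

/-! A `t`-prime `P` of a PvMD lies in a `t`-maximal ideal `M`, so `R_P` is a localization of the
valuation domain `R_M` and hence a valuation domain itself.
Since the ideals of `R_P` are totally ordered, every prime properly inside `P` lies in every
`P`-primary ideal, so a branched `P` is not the union of the primes below it. An element of `P`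
outside that union has `P` as a minimal prime, and if `P` is minimal over `(a)` then
`a²R_P ∩ R` is a `P`-primary ideal not containing `a`. Finally, a finitely generated `J` has
`J R_P = a R_P` for some `a ∈ J`, so `sJ ⊆ aR` for some `s ∉ P`; as `s/a ∈ (R : J)`, the inclusion
survives the `v`-closure, and `P` is minimal over `(a)` once it is minimal over `J_v`. -/

open IsLocalization

section LocalizationAtPrime

variable {A : Type*} [CommRing A] [IsDomain A]

theorem valuationRing_localization_of_le {P M : Ideal A} [P.IsPrime] [M.IsPrime] (hPM : P ≤ M)
    [ValuationRing (Localization.AtPrime M)] : ValuationRing (Localization.AtPrime P) := by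
  rw [ValuationRing.iff_isInteger_or_isInteger (Localization.AtPrime P) (FractionRing A)]
  have hle : ∀ x : FractionRing A,
      IsInteger (Localization.AtPrime M) x → IsInteger (Localization.AtPrime P) x := by
    rintro _ ⟨y, rfl⟩
    obtain ⟨⟨r, u⟩, rfl⟩ := mk'_surjective M.primeCompl y
    refine ⟨mk' _ r (⟨u, fun hu => u.2 (hPM hu)⟩ : P.primeCompl), ?_⟩
    rw [← mk'_eq_algebraMap_mk'_of_submonoid_le (Localization.AtPrime P) (FractionRing A)
        P.primeCompl_le_nonZeroDivisors,
      ← mk'_eq_algebraMap_mk'_of_submonoid_le (Localization.AtPrime M) (FractionRing A)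
        M.primeCompl_le_nonZeroDivisors]
  exact fun x => (ValuationRing.isInteger_or_isInteger _ x).imp (hle x) (hle x⁻¹)

variable {P : Ideal A} [P.IsPrime]

theorem isBranched_of_mem_minimalPrimes_span_singleton {a : A} (ha : a ≠ 0)
    (hP : P ∈ (Ideal.span {a}).minimalPrimes) : IsBranched A P := by
  let Aₚ := Localization.AtPrime P
  have haP : a ∈ P := hP.1.2 (Ideal.mem_span_singleton_self a)
  have hrad :
      ((Ideal.span {a ^ 2}).map (algebraMap A Aₚ)).radical = IsLocalRing.maximalIdeal Aₚ := by
    rw [← map_radical P.primeCompl, ← Ideal.span_singleton_pow, Ideal.radical_pow _ two_ne_zero,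
      map_radical P.primeCompl, AtPrime.radical_map_of_mem_minimalPrimes Aₚ P _ hP,
      AtPrime.map_eq_maximalIdeal]
  refine ⟨inferInstance, (Submodule.ne_bot_iff P).mpr ⟨a, haP, ha⟩, _,
    (Ideal.isPrimary_of_isMaximal_radical (hrad ▸ IsLocalRing.maximalIdeal.isMaximal Aₚ)).comap
      (algebraMap A Aₚ), ?_, fun hQ => ?_⟩
  · rw [← Ideal.comap_radical, hrad]
    exact AtPrime.under_maximalIdeal Aₚ P
  · have hunit : IsUnit (algebraMap A Aₚ a) := by
      have hdvd : algebraMap A Aₚ a ^ 2 ∣ algebraMap A Aₚ a ^ 1 := by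
        rw [pow_one, ← Ideal.mem_span_singleton, ← map_pow, ← Set.image_singleton,
          ← Ideal.map_span]
        exact (hQ ▸ haP : a ∈ Ideal.comap _ _)
      by_contra hnu
      have h0 : algebraMap A Aₚ a ≠ 0 :=
        (map_ne_zero_iff _ (IsLocalization.injective Aₚ P.primeCompl_le_nonZeroDivisors)).mpr ha
      exact absurd ((pow_dvd_pow_iff h0 hnu).mp hdvd) (by norm_num)
    exact (AtPrime.isUnit_to_map_iff Aₚ P a).mp hunit haP

theorem exists_mem_minimalPrimes_span_singleton_of_ne_biUnion (hP0 : P ≠ ⊥)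
    (hP : ¬ ((P : Set A) = ⋃ Q ∈ {Q : Ideal A | Q.IsPrime ∧ Q < P}, (Q : Set A))) :
    ∃ a : A, a ≠ 0 ∧ P ∈ (Ideal.span {a}).minimalPrimes := by
  obtain ⟨a, haP, ha⟩ := Set.not_subset.mp fun h =>
    hP (h.antisymm (Set.iUnion₂_subset fun Q hQ => hQ.2.le))
  have hlt : ∀ Q : Ideal A, Q.IsPrime → Q < P → a ∉ Q := fun Q hQ hQP haQ =>
    ha (Set.mem_biUnion (show Q ∈ {Q : Ideal A | Q.IsPrime ∧ Q < P} from ⟨hQ, hQP⟩) haQ)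
  refine ⟨a, fun h0 => hlt ⊥ Ideal.isPrime_bot (bot_lt_iff_ne_bot.mpr hP0) (h0 ▸ zero_mem _),
    ⟨‹_›, (Ideal.span_singleton_le_iff_mem P).mpr haP⟩, fun Q ⟨hQ, haQ⟩ hQP => ?_⟩
  by_contra hPQ
  exact hlt Q hQ (lt_of_le_not_ge hQP hPQ) (haQ (Ideal.mem_span_singleton_self a))

end LocalizationAtPrime

section ColonLocalization

variable {A : Type*} [CommRing A] (M : Submonoid A) (S : Type*) [CommRing S] [Algebra A S]

theorem exists_mem_colon_of_map_le [IsLocalization M S] {I J : Ideal A} (hJ : J.FG)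
    (hJI : J.map (algebraMap A S) ≤ I.map (algebraMap A S)) :
    ∃ m ∈ M, m ∈ I.colon (J : Set A) := by
  classical
  obtain ⟨T, rfl⟩ := hJ
  have hT : ∀ t ∈ T, ∃ m ∈ M, m * t ∈ I := fun t ht =>
    (algebraMap_mem_map_algebraMap_iff M S I t).mp
      (hJI (Ideal.mem_map_of_mem _ (Ideal.subset_span ht)))
  choose! m hmM hmI using hT
  refine ⟨∏ t ∈ T, m t, prod_mem hmM, ?_⟩
  rw [Ideal.colon_span, Submodule.mem_colon]
  intro t ht
  obtain ⟨c, hc⟩ := Finset.dvd_prod_of_mem m ht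
  rw [smul_eq_mul, hc, mul_right_comm]
  exact I.mul_mem_right c (hmI t ht)

theorem exists_mem_map_eq_map_span_singleton [IsLocalization M S] [IsBezout S] {J : Ideal A}
    (hJ : J.FG) :
    ∃ a ∈ J, J.map (algebraMap A S) = (Ideal.span {a}).map (algebraMap A S) := by
  obtain ⟨c, hc⟩ := (IsBezout.isPrincipal_of_FG _ (hJ.map (algebraMap A S))).principal
  have hcJ : c ∈ J.map (algebraMap A S) := hc ▸ Ideal.mem_span_singleton_self c
  obtain ⟨⟨⟨a, haJ⟩, m⟩, hm⟩ := (mem_map_algebraMap_iff M S).mp hcJ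
  refine ⟨a, haJ, ?_⟩
  rw [Ideal.map_span, Set.image_singleton, ← hm, Ideal.span_singleton_mul_right_unit
    (map_units S m), hc, Ideal.submodule_span_eq]

end ColonLocalization

section TClosure

variable {A K : Type*} [CommRing A] [CommRing K] [Algebra A K]

theorem le_vcl (J : Ideal A) : J ≤ vcl A K J := by
  intro x hx
  rw [vcl, Submodule.mem_comap, vop, dual, Submodule.mem_div_iff_forall_mul_mem]
  intro y hy
  rw [mul_comm]
  exact (Submodule.mem_div_iff_forall_mul_mem.mp hy) _ ⟨x, hx, rfl⟩

theorem vcl_le_tcl {I J : Ideal A} (hJ : J.FG) (hJ0 : J ≠ ⊥) (hJI : J ≤ I) :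
    vcl A K J ≤ tcl A K I :=
  le_iSup (fun J : {J : Ideal A // J.FG ∧ J ≠ ⊥ ∧ J ≤ I} => vcl A K J.1) ⟨J, hJ, hJ0, hJI⟩

theorem le_tcl (I : Ideal A) : I ≤ tcl A K I := by
  intro x hx
  obtain rfl | hx0 := eq_or_ne x 0
  · exact zero_mem _
  · exact vcl_le_tcl (Submodule.fg_span_singleton x) (mt Ideal.span_singleton_eq_bot.mp hx0)
      ((Ideal.span_singleton_le_iff_mem I).mpr hx) (le_vcl _ (Ideal.mem_span_singleton_self x))

theorem mem_minimalPrimes_vcl {P J : Ideal A} (hP : IsTIdeal A K P) (hJ : J.FG) (hJ0 : J ≠ ⊥)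
    (hPJ : P ∈ J.minimalPrimes) : P ∈ (vcl A K J).minimalPrimes :=
  ⟨⟨hPJ.1.1, (vcl_le_tcl hJ hJ0 hPJ.1.2).trans hP.2.le⟩,
    fun _ hq hqP => hPJ.2 ⟨hq.1, (le_vcl J).trans hq.2⟩ hqP⟩

theorem isTIdeal_sSup {c : Set (Ideal A)} (hc : ∀ I ∈ c, IsTIdeal A K I)
    (hchain : IsChain (· ≤ ·) c) (hne : c.Nonempty) : IsTIdeal A K (sSup c) := by
  obtain ⟨I₀, hI₀⟩ := hne
  refine ⟨fun h => (hc I₀ hI₀).1 (le_bot_iff.mp (h ▸ le_sSup hI₀)), le_antisymm ?_ (le_tcl _)⟩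
  refine iSup_le fun ⟨J, hJ, hJ0, hJc⟩ => ?_
  obtain ⟨I, hIc, hJI⟩ := (CompleteLattice.isCompactElement_iff_le_of_directed_sSup_le _ J).mp
    ((Submodule.fg_iff_compact J).mp hJ) c ⟨I₀, hI₀⟩ hchain.directedOn hJc
  exact ((vcl_le_tcl hJ hJ0 hJI).trans (hc I hIc).2.le).trans (le_sSup hIc)

theorem sSup_ne_top_of_isChain {c : Set (Ideal A)} (hc : ∀ I ∈ c, I ≠ ⊤)
    (hchain : IsChain (· ≤ ·) c) (hne : c.Nonempty) : sSup c ≠ ⊤ := by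
  intro h
  obtain ⟨I, hIc, hI1⟩ := (Submodule.mem_sSup_of_directed hne hchain.directedOn).mp
    (h ▸ Submodule.mem_top : (1 : A) ∈ sSup c)
  exact hc I hIc ((Ideal.eq_top_iff_one I).mpr hI1)

theorem exists_isTMax_le {I : Ideal A} (hI : IsTIdeal A K I) (hI1 : I ≠ ⊤) :
    ∃ M, IsTMax A K M ∧ I ≤ M := by
  obtain ⟨M, hIM, hM⟩ := zorn_le_nonempty₀ {J : Ideal A | IsTIdeal A K J ∧ J ≠ ⊤}
    (fun c hc hchain J hJ => ⟨sSup c, ⟨isTIdeal_sSup (fun I hI => (hc hI).1) hchain ⟨J, hJ⟩,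
      sSup_ne_top_of_isChain (fun I hI => (hc hI).2) hchain ⟨J, hJ⟩⟩, fun _ => le_sSup⟩)
    I ⟨hI, hI1⟩
  exact ⟨M, ⟨hM.1.1, hM.1.2, fun J hJ hJ1 hMJ => le_antisymm (hM.2 ⟨hJ, hJ1⟩ hMJ) hMJ⟩, hIM⟩

end TClosure

theorem colon_vcl {A K : Type*} [CommRing A] [Field K] [Algebra A K] [IsFractionRing A K]
    {a : A} (ha : a ≠ 0) (J : Ideal A) :
    (Ideal.span {a}).colon (vcl A K J : Set A) = (Ideal.span {a}).colon (J : Set A) := by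
  refine le_antisymm (Submodule.colon_mono le_rfl (le_vcl J)) fun s hs => ?_
  have ha' : algebraMap A K a ≠ 0 := (map_ne_zero_iff _ (IsFractionRing.injective A K)).mpr ha
  have hsa : algebraMap A K s / algebraMap A K a ∈ dual A K (sub A K J) := by
    rw [dual, Submodule.mem_div_iff_forall_mul_mem]
    rintro _ ⟨b, hb, rfl⟩
    obtain ⟨c, hc⟩ := Ideal.mem_span_singleton'.mp (Submodule.mem_colon.mp hs b hb)
    refine Submodule.mem_one.mpr ⟨c, ?_⟩
    rw [Algebra.linearMap_apply, eq_comm, div_mul_eq_mul_div, div_eq_iff ha', ← map_mul,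
      ← map_mul, hc, smul_eq_mul]
  rw [Submodule.mem_colon]
  intro x hx
  obtain ⟨c, hc⟩ := Submodule.mem_one.mp ((Submodule.mem_div_iff_forall_mul_mem.mp hx) _ hsa)
  rw [Algebra.linearMap_apply, mul_div_assoc', eq_div_iff ha', ← map_mul, ← map_mul] at hc
  rw [smul_eq_mul, mul_comm]
  exact Ideal.mem_span_singleton'.mpr ⟨c, IsFractionRing.injective A K hc⟩

section ValuationLocalization

variable {A : Type*} [CommRing A] [IsDomain A] {P : Ideal A} [P.IsPrime]
  [ValuationRing (Localization.AtPrime P)]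

theorem le_of_isPrimary_of_lt {Q q : Ideal A} (hQ : Q.IsPrimary) (hQP : Q.radical = P)
    [hq : q.IsPrime] (hqP : q < P) : q ≤ Q := by
  let Aₚ := Localization.AtPrime P
  obtain ⟨y, hyP, hyq⟩ := SetLike.exists_of_lt hqP
  obtain ⟨n, hyn⟩ := Ideal.mem_radical_iff.mp (hQP ▸ hyP : y ∈ Q.radical)
  have hqn : q.map (algebraMap A Aₚ) ≤ (Ideal.span {y ^ n}).map (algebraMap A Aₚ) := by
    refine (Std.Total.total _ _).resolve_right fun h => hyq (hq.mem_of_pow_mem n ?_)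
    rw [← under_map_of_isPrime_disjoint P.primeCompl Aₚ hq
      (Set.disjoint_left.mpr fun _ hs hsq => hs (hqP.le hsq))]
    exact h (Ideal.mem_map_of_mem _ (Ideal.mem_span_singleton_self _))
  calc q ≤ (q.map (algebraMap A Aₚ)).comap (algebraMap A Aₚ) := Ideal.le_comap_map
    _ ≤ ((Ideal.span {y ^ n}).map (algebraMap A Aₚ)).comap (algebraMap A Aₚ) :=
      Ideal.comap_mono hqn
    _ ≤ (Q.map (algebraMap A Aₚ)).comap (algebraMap A Aₚ) :=
      Ideal.comap_mono (Ideal.map_mono ((Ideal.span_singleton_le_iff_mem Q).mpr hyn))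
    _ = Q := under_map_of_isPrimary_disjoint P.primeCompl Aₚ hQ
      (Set.disjoint_left.mpr fun _ hs hsQ => hs (hQP ▸ Ideal.le_radical hsQ))

theorem ne_biUnion_of_isBranched (hP : IsBranched A P) :
    ¬ ((P : Set A) = ⋃ Q ∈ {Q : Ideal A | Q.IsPrime ∧ Q < P}, (Q : Set A)) := by
  obtain ⟨-, -, Q, hQ, hQP, hQne⟩ := hP
  refine fun hP => hQne (le_antisymm (hQP ▸ Ideal.le_radical) fun x hx => ?_)
  rw [← SetLike.mem_coe, hP, Set.mem_iUnion₂] at hx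
  obtain ⟨q, ⟨hq, hqP⟩, hxq⟩ := hx
  exact le_of_isPrimary_of_lt hQ hQP hqP hxq

theorem exists_mem_minimalPrimes_span_singleton_of_mem_minimalPrimes_vcl {J : Ideal A}
    (hJ : J.FG) (hJ0 : J ≠ ⊥) (hP : P ∈ (vcl A (FractionRing A) J).minimalPrimes) :
    ∃ a : A, a ≠ 0 ∧ P ∈ (Ideal.span {a}).minimalPrimes := by
  obtain ⟨a, haJ, hJa⟩ :=
    exists_mem_map_eq_map_span_singleton P.primeCompl (Localization.AtPrime P) hJ
  obtain ⟨s, hsP, hs⟩ := exists_mem_colon_of_map_le P.primeCompl _ hJ hJa.le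
  have ha0 : a ≠ 0 := by
    rintro rfl
    refine hJ0 (eq_bot_iff.mpr fun x hx => ?_)
    have hsx := Submodule.mem_colon.mp hs x hx
    rw [Ideal.span_singleton_eq_bot.mpr rfl, Ideal.mem_bot, smul_eq_mul] at hsx
    exact (mul_eq_zero.mp hsx).resolve_left fun h => hsP (h ▸ P.zero_mem)
  rw [← colon_vcl (K := FractionRing A) ha0] at hs
  refine ⟨a, ha0, ⟨‹_›, (Ideal.span_singleton_le_iff_mem P).mpr (hP.1.2 (le_vcl J haJ))⟩,
    fun q ⟨hq, haq⟩ hqP => hP.2 ⟨hq, fun x hx => ?_⟩ hqP⟩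
  exact (hq.mem_or_mem (haq (Submodule.mem_colon.mp hs x hx))).resolve_left fun h => hsP (hqP h)

end ValuationLocalization

theorem valuationRing_localization_of_isPvMD {A : Type*} [CommRing A] [IsDomain A]
    (hA : IsPvMD A) {P : Ideal A} [P.IsPrime] (hP : IsTIdeal A (FractionRing A) P) :
    ValuationRing (Localization.AtPrime P) := by
  obtain ⟨M, hM, hPM⟩ := exists_isTMax_le hP (Ideal.IsPrime.ne_top inferInstance)
  obtain ⟨_, _⟩ := hA M hM
  exact valuationRing_localization_of_le hPM

theorem stmt_1 (hR : IsPvMD R)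
    (P : Ideal R) (hP : IsTPrime R KK P) :
    List.TFAE [
      IsBranched R P,
      ∃ a : R, a ≠ 0 ∧ P ∈ (Ideal.span {a} : Ideal R).minimalPrimes,
      ∃ J : Ideal R, J ≠ ⊥ ∧ J.FG ∧ P ∈ J.minimalPrimes,
      ∃ J : Ideal R, J ≠ ⊥ ∧ J.FG ∧ P ∈ (vcl R KK J).minimalPrimes,
      ¬ ((P : Set R) = ⋃ Q ∈ {Q : Ideal R | Q.IsPrime ∧ Q < P}, (Q : Set R))] := by
  have := hP.1
  have := valuationRing_localization_of_isPvMD hR hP.2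
  tfae_have 1 → 5 := ne_biUnion_of_isBranched
  tfae_have 5 → 2 := exists_mem_minimalPrimes_span_singleton_of_ne_biUnion hP.2.1
  tfae_have 2 → 3 := fun ⟨a, ha, hPa⟩ =>
    ⟨_, mt Ideal.span_singleton_eq_bot.mp ha, Submodule.fg_span_singleton a, hPa⟩
  tfae_have 3 → 4 := fun ⟨J, hJ0, hJ, hPJ⟩ => ⟨J, hJ0, hJ, mem_minimalPrimes_vcl hP.2 hJ hJ0 hPJ⟩
  tfae_have 4 → 2 := fun ⟨J, hJ0, hJ, hPJ⟩ =>
    exists_mem_minimalPrimes_span_singleton_of_mem_minimalPrimes_vcl hJ hJ0 hPJ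
  tfae_have 2 → 1 := fun ⟨a, ha, hPa⟩ => isBranched_of_mem_minimalPrimes_span_singleton ha hPa
  tfae_finish

end Paper
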